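/- arXiv:1805.08565 — 2 statements merged into one kernel-verified Lean document; each statement's English description precedes it below -/
import Mathlib

section
/- Let p, K : [a,b] → ℝ be continuous with p > 0 and K > 0 on [a,b], and let g : [a,b] → ℝ be twice continuously differentiable, satisfying the Sturm–Liouville equation (p·K·g')' + λ·p·g = 0 on [a,b] with λ > 0, and the Neumann boundary conditions p(a)K(a)g'(a) = 0 and p(b)K(b)g'(b) = 0. Suppose g has exactly one zero ξ in (a,b), with g < 0 on [a,ξ) and g > 0 on (ξ,b]. Then g is strictly monotonically increasing on [a,b]. -/
/-!
The flux `F = p K g'` satisfies `F' = -λ p g`, so it increases where `g < 0` and decreases where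
`g > 0`. Vanishing at both endpoints by the Neumann conditions, it is therefore positive on
`(a, b)`, and so is `g' = F / (p K)`.
-/

open Set

theorem strictMonoOn_Icc_of_hasDerivAt_pos {a b : ℝ} {f f' : ℝ → ℝ}
    (hf : ∀ x ∈ Icc a b, HasDerivAt f (f' x) x) (hf' : ∀ x ∈ Ioo a b, 0 < f' x) :
    StrictMonoOn f (Icc a b) := by
  refine strictMonoOn_of_hasDerivWithinAt_pos (f' := f') (convex_Icc a b)
    (fun x hx => (hf x hx).continuousAt.continuousWithinAt) (fun x hx => ?_) ?_
  · rw [interior_Icc] at hx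
    exact (hf x (Ioo_subset_Icc_self hx)).hasDerivWithinAt
  · simpa only [interior_Icc] using hf'

theorem strictAntiOn_Icc_of_hasDerivAt_neg {a b : ℝ} {f f' : ℝ → ℝ}
    (hf : ∀ x ∈ Icc a b, HasDerivAt f (f' x) x) (hf' : ∀ x ∈ Ioo a b, f' x < 0) :
    StrictAntiOn f (Icc a b) := by
  have hneg : StrictMonoOn (fun x => -f x) (Icc a b) :=
    strictMonoOn_Icc_of_hasDerivAt_pos (fun x hx => (hf x hx).neg)
      (fun x hx => neg_pos.mpr (hf' x hx))
  exact fun x hx y hy hxy => neg_lt_neg_iff.mp (hneg hx hy hxy)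

theorem pos_of_hasDerivAt_pos_neg_of_eq_zero {a b c : ℝ} {F F' : ℝ → ℝ} (hc : c ∈ Icc a b)
    (hF : ∀ x ∈ Icc a b, HasDerivAt F (F' x) x)
    (hinc : ∀ x ∈ Ioo a c, 0 < F' x) (hdec : ∀ x ∈ Ioo c b, F' x < 0)
    (ha : F a = 0) (hb : F b = 0) : ∀ x ∈ Ioo a b, 0 < F x := by
  intro x hx
  rcases le_or_gt x c with hxc | hcx
  · have hmono : StrictMonoOn F (Icc a c) :=
      strictMonoOn_Icc_of_hasDerivAt_pos
        (fun y hy => hF y (Icc_subset_Icc_right hc.2 hy)) hinc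
    simpa only [ha] using
      hmono (left_mem_Icc.mpr hc.1) ⟨hx.1.le, hxc⟩ hx.1
  · have hanti : StrictAntiOn F (Icc c b) :=
      strictAntiOn_Icc_of_hasDerivAt_neg
        (fun y hy => hF y (Icc_subset_Icc_left hc.1 hy)) hdec
    simpa only [hb] using
      hanti ⟨hcx.le, hx.2.le⟩ (right_mem_Icc.mpr hc.2) hx.2

theorem sturm_liouville_first_harmonic_monotone_general
    (a b ξ lam : ℝ)
    (p K g g' pKg' : ℝ → ℝ)
    (hppos : ∀ x ∈ Set.Icc a b, 0 < p x) (hKpos : ∀ x ∈ Set.Icc a b, 0 < K x)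
    (hg' : ∀ x ∈ Set.Icc a b, HasDerivAt g (g' x) x)
    (hpKg' : ∀ x ∈ Set.Icc a b, HasDerivAt (fun y => p y * K y * g' y) (pKg' x) x)
    (hlam : 0 < lam)
    (heq : ∀ x ∈ Set.Icc a b, pKg' x + lam * p x * g x = 0)
    (hbca : p a * K a * g' a = 0) (hbcb : p b * K b * g' b = 0)
    (hξ : ξ ∈ Set.Ioo a b)
    (hneg : ∀ x ∈ Set.Ico a ξ, g x < 0)
    (hpos : ∀ x ∈ Set.Ioc ξ b, 0 < g x) :
    StrictMonoOn g (Set.Icc a b) := by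
  have hflux_deriv : ∀ x ∈ Icc a b, pKg' x = -(lam * p x) * g x := fun x hx => by
    linarith [heq x hx]
  have hflux_pos : ∀ x ∈ Ioo a b, 0 < p x * K x * g' x := by
    refine pos_of_hasDerivAt_pos_neg_of_eq_zero (Ioo_subset_Icc_self hξ) hpKg'
      (fun x hx => ?_) (fun x hx => ?_) hbca hbcb
    · have hxI : x ∈ Icc a b := ⟨hx.1.le, hx.2.le.trans hξ.2.le⟩
      rw [hflux_deriv x hxI]
      exact mul_pos_of_neg_of_neg (neg_neg_of_pos (mul_pos hlam (hppos x hxI)))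
        (hneg x ⟨hx.1.le, hx.2⟩)
    · have hxI : x ∈ Icc a b := ⟨hξ.1.le.trans hx.1.le, hx.2.le⟩
      rw [hflux_deriv x hxI]
      exact mul_neg_of_neg_of_pos (neg_neg_of_pos (mul_pos hlam (hppos x hxI)))
        (hpos x ⟨hx.1, hx.2.le⟩)
  refine strictMonoOn_Icc_of_hasDerivAt_pos hg' fun x hx => ?_
  have hxI : x ∈ Icc a b := Ioo_subset_Icc_self hx
  exact pos_of_mul_pos_right (hflux_pos x hx) (mul_pos (hppos x hxI) (hKpos x hxI)).le

/-- Sturm–Liouville monotonicity of the first harmonic (Lemma 1). -/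
theorem sturm_liouville_first_harmonic_monotone
    (a b ξ lam : ℝ) (hab : a < b)
    (p K g g' pKg' : ℝ → ℝ)
    (hp : ContinuousOn p (Set.Icc a b)) (hK : ContinuousOn K (Set.Icc a b))
    (hppos : ∀ x ∈ Set.Icc a b, 0 < p x) (hKpos : ∀ x ∈ Set.Icc a b, 0 < K x)
    (hg' : ∀ x ∈ Set.Icc a b, HasDerivAt g (g' x) x)
    (hg'cont : ContinuousOn g' (Set.Icc a b))
    (hpKg' : ∀ x ∈ Set.Icc a b, HasDerivAt (fun y => p y * K y * g' y) (pKg' x) x)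
    (hpKg'cont : ContinuousOn pKg' (Set.Icc a b))
    (hlam : 0 < lam)
    (heq : ∀ x ∈ Set.Icc a b, pKg' x + lam * p x * g x = 0)
    (hbca : p a * K a * g' a = 0) (hbcb : p b * K b * g' b = 0)
    (hξ : ξ ∈ Set.Ioo a b) (hgξ : g ξ = 0)
    (huniq : ∀ x ∈ Set.Ioo a b, g x = 0 → x = ξ)
    (hneg : ∀ x ∈ Set.Ico a ξ, g x < 0)
    (hpos : ∀ x ∈ Set.Ioc ξ b, 0 < g x) :
    StrictMonoOn g (Set.Icc a b) :=
  sturm_liouville_first_harmonic_monotone_general a b ξ lam p K g g' pKg' hppos hKpos hg' hpKg' hlam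
    heq hbca hbcb hξ hneg hpos
end

section
/- Let f : ℝ^{r×p} × ℝ^{r×q} → ℝ be defined by f(B,U) = tr⟨(w − Bζ − Uμ)(w − Bζ − Uμ)ᵀ⟩ where w, ζ, μ are fixed finite families of vectors and ⟨·⟩ denotes an empirical average. If ⟨ζζᵀ⟩ and ⟨μμᵀ⟩ are invertible and B, U satisfy the stationarity equations ⟨wζᵀ⟩ = U⟨μζᵀ⟩ + B⟨ζζᵀ⟩ and ⟨wμᵀ⟩ = B⟨ζμᵀ⟩ + U⟨μμᵀ⟩, and additionally the Schur-complement matrix ⟨ζζᵀ⟩ − ⟨ζμᵀ⟩⟨μμᵀ⟩⁻¹⟨μζᵀ⟩ is invertible, then B is uniquely determined as B = (⟨wζᵀ⟩ − ⟨wμᵀ⟩⟨μμᵀ⟩⁻¹⟨μζᵀ⟩)(⟨ζζᵀ⟩ − ⟨ζμᵀ⟩⟨μμᵀ⟩⁻¹⟨μζᵀ⟩)⁻¹. -/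
/-!
Multiplying the second normal equation on the right by `⟨μμᵀ⟩⁻¹⟨μζᵀ⟩` produces the term
`U⟨μζᵀ⟩` that also occurs in the first one; subtracting eliminates `U` and leaves
`⟨wζᵀ⟩ - ⟨wμᵀ⟩⟨μμᵀ⟩⁻¹⟨μζᵀ⟩ = B S` with `S` the Schur complement of `⟨μμᵀ⟩`, which is then
cancelled on the right.
-/

open Matrix

/-- Empirical average of the outer product of two finite families of vectors. -/
noncomputable def avgOuter {T : Type*} [Fintype T] {a b : ℕ}
    (x : T → Fin a → ℝ) (y : T → Fin b → ℝ) : Matrix (Fin a) (Fin b) ℝ :=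
  Matrix.of fun i j => (∑ t, x t i * y t j) / (Fintype.card T : ℝ)

namespace Matrix

variable {R k m n : Type*} [CommRing R] [Fintype m] [Fintype n] [DecidableEq n]
  {A₁₁ : Matrix m m R} {A₁₂ : Matrix m n R} {A₂₁ : Matrix n m R} {A₂₂ : Matrix n n R}
  {C₁ : Matrix k m R} {C₂ : Matrix k n R} {B : Matrix k m R} {U : Matrix k n R}

theorem sub_mul_inv_mul_eq_mul_schur_of_normal_eqs (h₂₂ : IsUnit A₂₂.det)
    (h₁ : C₁ = U * A₂₁ + B * A₁₁) (h₂ : C₂ = B * A₁₂ + U * A₂₂) :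
    C₁ - C₂ * A₂₂⁻¹ * A₂₁ = B * (A₁₁ - A₁₂ * A₂₂⁻¹ * A₂₁) := by
  have elim : C₂ * A₂₂⁻¹ * A₂₁ = B * (A₁₂ * A₂₂⁻¹ * A₂₁) + U * A₂₁ := by
    rw [h₂, Matrix.add_mul, Matrix.add_mul, mul_nonsing_inv_cancel_right _ _ h₂₂]
    simp only [Matrix.mul_assoc]
  rw [elim, h₁, Matrix.mul_sub]
  abel

theorem eq_mul_schur_inv_of_normal_eqs [DecidableEq m] (h₂₂ : IsUnit A₂₂.det)
    (hS : IsUnit (A₁₁ - A₁₂ * A₂₂⁻¹ * A₂₁).det)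
    (h₁ : C₁ = U * A₂₁ + B * A₁₁) (h₂ : C₂ = B * A₁₂ + U * A₂₂) :
    B = (C₁ - C₂ * A₂₂⁻¹ * A₂₁) * (A₁₁ - A₁₂ * A₂₂⁻¹ * A₂₁)⁻¹ := by
  rw [sub_mul_inv_mul_eq_mul_schur_of_normal_eqs h₂₂ h₁ h₂, mul_nonsing_inv_cancel_right _ _ hS]

end Matrix

theorem pfax_optimal_B_explicit_general
    {T : Type*} [Fintype T] (r p q : ℕ)
    (w : T → Fin r → ℝ) (ζ : T → Fin p → ℝ) (μ : T → Fin q → ℝ)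
    (B : Matrix (Fin r) (Fin p) ℝ) (U : Matrix (Fin r) (Fin q) ℝ)
    (hμμ : IsUnit (avgOuter μ μ))
    (hSchur : IsUnit (avgOuter ζ ζ - avgOuter ζ μ * (avgOuter μ μ)⁻¹ * avgOuter μ ζ))
    (hstat₁ : avgOuter w ζ = U * avgOuter μ ζ + B * avgOuter ζ ζ)
    (hstat₂ : avgOuter w μ = B * avgOuter ζ μ + U * avgOuter μ μ) :
    B = (avgOuter w ζ - avgOuter w μ * (avgOuter μ μ)⁻¹ * avgOuter μ ζ) *
        (avgOuter ζ ζ - avgOuter ζ μ * (avgOuter μ μ)⁻¹ * avgOuter μ ζ)⁻¹ :=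
  eq_mul_schur_inv_of_normal_eqs ((isUnit_iff_isUnit_det _).mp hμμ)
    ((isUnit_iff_isUnit_det _).mp hSchur) hstat₁ hstat₂

/-- Explicit solution for the optimal prediction matrix `B` in PFAx (eq. (22)):
the two coupled normal equations determine `B` uniquely via a Schur complement. -/
theorem pfax_optimal_B_explicit
    {T : Type*} [Fintype T] [Nonempty T] (r p q : ℕ)
    (w : T → Fin r → ℝ) (ζ : T → Fin p → ℝ) (μ : T → Fin q → ℝ)
    (B : Matrix (Fin r) (Fin p) ℝ) (U : Matrix (Fin r) (Fin q) ℝ)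
    (hζζ : IsUnit (avgOuter ζ ζ)) (hμμ : IsUnit (avgOuter μ μ))
    (hSchur : IsUnit (avgOuter ζ ζ - avgOuter ζ μ * (avgOuter μ μ)⁻¹ * avgOuter μ ζ))
    (hstat₁ : avgOuter w ζ = U * avgOuter μ ζ + B * avgOuter ζ ζ)
    (hstat₂ : avgOuter w μ = B * avgOuter ζ μ + U * avgOuter μ μ) :
    B = (avgOuter w ζ - avgOuter w μ * (avgOuter μ μ)⁻¹ * avgOuter μ ζ) *
        (avgOuter ζ ζ - avgOuter ζ μ * (avgOuter μ μ)⁻¹ * avgOuter μ ζ)⁻¹ :=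
  pfax_optimal_B_explicit_general r p q w ζ μ B U hμμ hSchur hstat₁ hstat₂
end
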